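/- arXiv:1209.4850 — 6 statements merged into one kernel-verified Lean document; each statement's English description precedes it below -/
import Mathlib

section
/- For every integer n ≥ 0 and every θ ∈ ℝ, the n-th order moment of the Radon transform satisfies m_n(θ) = (1/2^n) Σ_{l=0}^n C(n,l) μ_{l, n−l} e^{i(n−2l)θ}, where C(n,l) is the binomial coefficient. In particular, the entries of row n+1 of the Pascal triangle of the image are, up to the factor 1/2^n, the Fourier coefficients of m_n(θ). -/
/-! The projection `x cos θ + y sin θ` of `z = x + iy` is
`Re (z e^{-iθ}) = (z e^{-iθ} + z̄ e^{iθ}) / 2`. Expanding its `n`-th power by the binomial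
theorem, the term `z^l z̄^(n-l)` carries the phase `e^{i(n-2l)θ}`; summing against the
intensities turns these monomials into the moments `μ_{l,n-l}`. -/

open Complex

theorem re_mul_cos_add_im_mul_sin (w : ℂ) (θ : ℝ) :
    w.re * Real.cos θ + w.im * Real.sin θ = (w * exp (-(θ * I))).re := by
  simp [mul_re, exp_re, exp_im]

theorem pow_re_mul_cos_add_im_mul_sin (w : ℂ) (θ : ℝ) (n : ℕ) :
    ((w.re * Real.cos θ + w.im * Real.sin θ : ℝ) : ℂ) ^ n
      = (1 / 2 ^ n) * ∑ l ∈ Finset.range (n + 1),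
          (n.choose l : ℂ) * (w ^ l * (starRingEnd ℂ) w ^ (n - l))
            * exp (I * ((n : ℂ) - 2 * (l : ℂ)) * (θ : ℂ)) := by
  rw [re_mul_cos_add_im_mul_sin, re_eq_add_conj, div_pow, add_pow, Finset.mul_sum, Finset.sum_div]
  refine Finset.sum_congr rfl fun l hl => ?_
  have hcast : ((n - l : ℕ) : ℂ) = n - l := Nat.cast_sub (Finset.mem_range_succ_iff.mp hl)
  have hexp :
      exp (l * -(θ * I)) * exp ((n - l : ℕ) * -(θ * -I)) = exp (I * (n - 2 * l) * θ) := by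
    rw [← exp_add, hcast]
    ring_nf
  simp only [map_mul, ← exp_conj, mul_pow, ← exp_nat_mul, map_neg, conj_ofReal, conj_I]
  rw [← hexp]
  ring

/-- the `n`-th order moment of the Radon transform satisfies
`m_n(θ) = 2⁻ⁿ ∑_{l=0}^n C(n,l) μ_{l,n-l} e^{i(n-2l)θ}`. -/
theorem pascal_stmt4 (N : ℕ) (z : Fin N → ℂ) (ρ : Fin N → ℝ) (n : ℕ) (θ : ℝ) :
    ((∑ k, ((z k).re * Real.cos θ + (z k).im * Real.sin θ) ^ n * ρ k : ℝ) : ℂ)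
      = (1 / 2 ^ n) * ∑ l ∈ Finset.range (n + 1),
          (n.choose l : ℂ)
            * (∑ k, z k ^ l * (starRingEnd ℂ) (z k) ^ (n - l) * (ρ k : ℂ))
            * Complex.exp (Complex.I * ((n : ℂ) - 2 * (l : ℂ)) * (θ : ℂ)) := by
  simp only [ofReal_sum, ofReal_mul, ofReal_pow, pow_re_mul_cos_add_im_mul_sin, Finset.mul_sum,
    Finset.sum_mul]
  rw [Finset.sum_comm]
  refine Finset.sum_congr rfl fun l _ => Finset.sum_congr rfl fun k _ => ?_
  ring
end

section
/- Fix an integer n ≥ 0 and angles θ_1, …, θ_{n+1} ∈ ℝ such that the complex numbers e^{2iθ_1}, …, e^{2iθ_{n+1}} are pairwise distinct. If two discrete images have equal Radon-transform moments of order n at these angles, i.e. m_n^{(1)}(θ_a) = m_n^{(2)}(θ_a) for a = 1, …, n+1, then their moments of total order n agree: μ_{l, n−l}^{(1)} = μ_{l, n−l}^{(2)} for all l = 0, 1, …, n. (Equivalently: the last row of the Pascal triangle T^n(I) can be reconstructed from n+1 generic samples of m_n.) -/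
/-!
With `w = e^{2iθ}` one has `z + z̄ w = 2 e^{iθ} (x cos θ + y sin θ)` for `z = x + iy`, so by the
binomial theorem `(2 e^{iθ})ⁿ m_n(θ) = Σ_j C(n,j) μ_{n-j,j} w^j`. Thus the `n`-th Radon moment at
`θ` determines the value at `e^{2iθ}` of a polynomial of degree at most `n` whose coefficients
are, up to nonzero binomial factors, the moments of total order `n`; values at `n + 1` distinct
points determine such a polynomial.
-/

open Finset Polynomial Complex ComplexConjugate

noncomputable section

variable {ι : Type*} [Fintype ι]

def complexMoment (z : ι → ℂ) (ρ : ι → ℝ) (j l : ℕ) : ℂ :=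
  ∑ k, z k ^ j * conj (z k) ^ l * ρ k

def radonMoment (z : ι → ℂ) (ρ : ι → ℝ) (n : ℕ) (θ : ℝ) : ℝ :=
  ∑ k, ((z k).re * Real.cos θ + (z k).im * Real.sin θ) ^ n * ρ k

/-- Generating polynomial of the `n`-th row of the Pascal triangle `T^n(I)` of moments. -/
def pascalRowPoly (z : ι → ℂ) (ρ : ι → ℝ) (n : ℕ) : ℂ[X] :=
  ∑ j ∈ range (n + 1), C (n.choose j * complexMoment z ρ (n - j) j) * X ^ j

theorem add_conj_mul_exp_two_mul_I (z : ℂ) (θ : ℝ) :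
    z + conj z * exp (2 * I * θ)
      = 2 * exp (θ * I) * ((z.re * Real.cos θ + z.im * Real.sin θ : ℝ) : ℂ) := by
  have hexp : exp (2 * I * θ) = exp (θ * I) ^ 2 := by
    rw [← exp_nat_mul]
    ring_nf
  have hconj : conj z = z.re - z.im * I := by
    apply Complex.ext <;> simp
  rw [hexp, exp_mul_I, hconj]
  nth_rewrite 1 [← re_add_im z]
  push_cast
  linear_combination (-(z.re + z.im * I)) * cos_sq_add_sin_sq (θ : ℂ)
    + (z.re * sin θ ^ 2 - 2 * z.im * cos θ * sin θ - z.im * sin θ ^ 2 * I) * I_sq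

theorem eval_pascalRowPoly (z : ι → ℂ) (ρ : ι → ℝ) (n : ℕ) (θ : ℝ) :
    (pascalRowPoly z ρ n).eval (exp (2 * I * θ)) = (2 * exp (θ * I)) ^ n * radonMoment z ρ n θ := by
  set w := exp (2 * I * θ)
  have hbinom (k : ι) : (z k + conj (z k) * w) ^ n * ρ k
      = ∑ j ∈ range (n + 1), n.choose j * (z k ^ (n - j) * conj (z k) ^ j * ρ k) * w ^ j := by
    rw [add_comm, add_pow, sum_mul]
    refine sum_congr rfl fun j _ => ?_
    ring
  simp only [pascalRowPoly, complexMoment, radonMoment, eval_finsetSum, eval_mul, eval_C,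
    eval_pow, eval_X, ofReal_sum, mul_sum, sum_mul]
  rw [sum_comm]
  refine sum_congr rfl fun k _ => ?_
  rw [← hbinom, add_conj_mul_exp_two_mul_I, mul_pow, ofReal_mul, ofReal_pow]
  ring

theorem coeff_pascalRowPoly (z : ι → ℂ) (ρ : ι → ℝ) {n j : ℕ} (hj : j ≤ n) :
    (pascalRowPoly z ρ n).coeff j = n.choose j * complexMoment z ρ (n - j) j := by
  rw [pascalRowPoly, finsetSum_coeff, sum_eq_single j]
  · rw [coeff_C_mul_X_pow, if_pos rfl]
  · intro i _ hij
    rw [coeff_C_mul_X_pow, if_neg (Ne.symm hij)]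
  · intro hj'
    exact absurd (mem_range.mpr (Nat.lt_succ_of_le hj)) hj'

theorem natDegree_pascalRowPoly_le (z : ι → ℂ) (ρ : ι → ℝ) (n : ℕ) :
    (pascalRowPoly z ρ n).natDegree ≤ n :=
  natDegree_sum_le_of_forall_le _ _ fun j hj =>
    (natDegree_C_mul_X_pow_le _ j).trans (Nat.le_of_lt_succ (mem_range.mp hj))

theorem pascalRowPoly_eq_of_radonMoment_eq {κ σ : Type*} [Fintype κ] [Fintype σ]
    {z₁ : ι → ℂ} {ρ₁ : ι → ℝ} {z₂ : κ → ℂ} {ρ₂ : κ → ℝ} {n : ℕ} {θ : σ → ℝ}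
    (hθ : Function.Injective fun a => exp (2 * I * θ a)) (hcard : n < Fintype.card σ)
    (h : ∀ a, radonMoment z₁ ρ₁ n (θ a) = radonMoment z₂ ρ₂ n (θ a)) :
    pascalRowPoly z₁ ρ₁ n = pascalRowPoly z₂ ρ₂ n := by
  refine eq_of_natDegree_lt_card_of_eval_eq _ _ hθ (fun a => ?_) ?_
  · simp only [eval_pascalRowPoly, h a]
  · exact max_le (natDegree_pascalRowPoly_le _ _ _) (natDegree_pascalRowPoly_le _ _ _)
      |>.trans_lt hcard

theorem complexMoment_eq_of_radonMoment_eq {κ σ : Type*} [Fintype κ] [Fintype σ]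
    {z₁ : ι → ℂ} {ρ₁ : ι → ℝ} {z₂ : κ → ℂ} {ρ₂ : κ → ℝ} {n : ℕ} {θ : σ → ℝ}
    (hθ : Function.Injective fun a => exp (2 * I * θ a)) (hcard : n < Fintype.card σ)
    (h : ∀ a, radonMoment z₁ ρ₁ n (θ a) = radonMoment z₂ ρ₂ n (θ a)) {l : ℕ} (hl : l ≤ n) :
    complexMoment z₁ ρ₁ l (n - l) = complexMoment z₂ ρ₂ l (n - l) := by
  have hcoeff := congrArg (coeff · (n - l)) (pascalRowPoly_eq_of_radonMoment_eq hθ hcard h)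
  simp only [coeff_pascalRowPoly _ _ (Nat.sub_le n l), Nat.sub_sub_self hl] at hcoeff
  exact mul_left_cancel₀ (Nat.cast_ne_zero.mpr (Nat.choose_pos (Nat.sub_le n l)).ne') hcoeff

end

/-- `n+1` generic samples of the `n`-th Radon-transform moment determine all
the moments `μ_{l,n-l}` of total order `n` (the last row of the Pascal triangle `T^n(I)`). -/
theorem pascal_stmt5 (n : ℕ) (θ : Fin (n + 1) → ℝ)
    (hθ : Function.Injective fun a => Complex.exp (2 * Complex.I * (θ a : ℂ)))
    (N₁ N₂ : ℕ) (z₁ : Fin N₁ → ℂ) (ρ₁ : Fin N₁ → ℝ) (z₂ : Fin N₂ → ℂ) (ρ₂ : Fin N₂ → ℝ)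
    (h : ∀ a, ∑ k, ((z₁ k).re * Real.cos (θ a) + (z₁ k).im * Real.sin (θ a)) ^ n * ρ₁ k
            = ∑ k, ((z₂ k).re * Real.cos (θ a) + (z₂ k).im * Real.sin (θ a)) ^ n * ρ₂ k) :
    ∀ l ≤ n,
      ∑ k, z₁ k ^ l * (starRingEnd ℂ) (z₁ k) ^ (n - l) * (ρ₁ k : ℂ)
        = ∑ k, z₂ k ^ l * (starRingEnd ℂ) (z₂ k) ^ (n - l) * (ρ₂ k : ℂ) := fun _ hl =>
  complexMoment_eq_of_radonMoment_eq hθ (by simp) h hl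
end

section
/- Let z_1, …, z_N ∈ ℂ be pairwise distinct pixel locations and let θ_1, …, θ_N ∈ ℝ be angles such that e^{2iθ_1}, …, e^{2iθ_N} are pairwise distinct. If two intensity assignments ρ, ρ' : {1,…,N} → ℝ on these pixel locations satisfy m_n^{(ρ)}(θ_a) = m_n^{(ρ')}(θ_a) for every n = 0, 1, …, N−1 and every a = 1, …, n+1, then ρ_k = ρ'_k for all k. (Equivalently: given the pixel locations, the image can be reconstructed from the moments of its Radon transform at N generic fixed angles.) -/
/-!
Since `x cos θ + y sin θ = Re (z̄ e^{iθ})`, multiplying the projection of `z` by `2 e^{iθ}` gives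
`z + z̄ u` with `u = e^{2iθ}`. So, up to the nonzero factor `(2 e^{iθ})^n`, the `n`-th moment of
`ρ - ρ'` at `θ` is the value at `u` of `Σ_k (ρ_k - ρ'_k) (z_k + z̄_k X)^n`, a polynomial of degree
at most `n`. It vanishes at the `n + 1` distinct points `e^{2iθ_a}`, hence is zero, and so is its
constant term `Σ_k (ρ_k - ρ'_k) z_k^n`. These power sums vanishing for all `n < N`, the
Vandermonde matrix of the distinct `z_k` forces `ρ = ρ'`.
-/

open Complex ComplexConjugate Polynomial

theorem ofReal_re_mul_cos_add_im_mul_sin_mul_two_exp (z : ℂ) (t : ℝ) :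
    ((z.re * Real.cos t + z.im * Real.sin t : ℝ) : ℂ) * (2 * exp (t * I)) =
      z + conj z * exp (2 * I * t) := by
  have hexp : exp (2 * I * t) = exp (t * I) * exp (t * I) := by rw [← exp_add]; ring_nf
  have hinv : exp (-(t * I)) * exp (t * I) = 1 := by rw [← exp_add]; simp
  push_cast
  rw [re_eq_add_conj, im_eq_sub_conj, cos, sin, hexp]
  field_simp
  linear_combination 2 * z * hinv

theorem sum_mul_pow_eq_zero_of_forall_sum_mul_add_mul_pow_eq_zero {R ι κ : Type*} [CommRing R]
    [IsDomain R] [Fintype ι] [Fintype κ] (a b c : ι → R) {n : ℕ} {u : κ → R}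
    (hu : Function.Injective u) (hcard : n < Fintype.card κ)
    (h : ∀ j, ∑ k, c k * (a k + b k * u j) ^ n = 0) :
    ∑ k, c k * a k ^ n = 0 := by
  set p : R[X] := ∑ k, C (c k) * (C (b k) * X + C (a k)) ^ n
  have hp : ∀ x, p.eval x = ∑ k, c k * (a k + b k * x) ^ n := by
    simp [p, eval_finsetSum, add_comm]
  have hdeg : p.natDegree ≤ n := by
    refine natDegree_sum_le_of_forall_le _ _ fun k _ => (natDegree_C_mul_le _ _).trans ?_
    simpa using natDegree_pow_le_of_le n (natDegree_linear_le (a := b k) (b := a k))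
  have hzero : p = 0 :=
    eq_zero_of_natDegree_lt_card_of_eval_eq_zero p hu (fun j => (hp _).trans (h j))
      (hdeg.trans_lt hcard)
  simpa [hp] using congrArg (eval 0) hzero

theorem sum_mul_add_conj_mul_exp_pow_eq {ι : Type*} [Fintype ι] (z : ι → ℂ) (d : ι → ℝ)
    (t : ℝ) (n : ℕ) :
    ∑ k, (d k : ℂ) * (z k + conj (z k) * exp (2 * I * t)) ^ n =
      (2 * exp (t * I)) ^ n *
        ↑(∑ k, ((z k).re * Real.cos t + (z k).im * Real.sin t) ^ n * d k) := by
  simp only [← ofReal_re_mul_cos_add_im_mul_sin_mul_two_exp, ofReal_sum, ofReal_mul,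
    ofReal_pow, Finset.mul_sum]
  refine Finset.sum_congr rfl fun k _ => ?_
  ring

/-- with known pairwise distinct pixel locations, the image is determined by
the Radon-transform moments `m_n(θ_a)`, `n = 0, …, N-1`, `a = 1, …, n+1`, at `N` generic
fixed angles. -/
theorem pascal_stmt6 (N : ℕ) (z : Fin N → ℂ) (hz : Function.Injective z)
    (θ : Fin N → ℝ)
    (hθ : Function.Injective fun a => Complex.exp (2 * Complex.I * (θ a : ℂ)))
    (ρ ρ' : Fin N → ℝ)
    (h : ∀ n < N, ∀ a : Fin N, (a : ℕ) ≤ n →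
      ∑ k, ((z k).re * Real.cos (θ a) + (z k).im * Real.sin (θ a)) ^ n * ρ k
        = ∑ k, ((z k).re * Real.cos (θ a) + (z k).im * Real.sin (θ a)) ^ n * ρ' k) :
    ∀ k, ρ k = ρ' k := by
  set d : Fin N → ℝ := fun k => ρ k - ρ' k
  have hmoment : ∀ n < N, ∀ a : Fin N, (a : ℕ) ≤ n →
      ∑ k, ((z k).re * Real.cos (θ a) + (z k).im * Real.sin (θ a)) ^ n * d k = 0 := by
    intro n hn a ha
    simp only [d, mul_sub, Finset.sum_sub_distrib, h n hn a ha, sub_self]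
  have hpow : ∀ n : Fin N, ∑ k, (d k : ℂ) * z k ^ (n : ℕ) = 0 := by
    intro n
    refine sum_mul_pow_eq_zero_of_forall_sum_mul_add_mul_pow_eq_zero z (conj ∘ z) _
      (u := fun j : Fin (n + 1) => exp (2 * I * θ (Fin.castLE n.isLt j)))
      (hθ.comp (Fin.castLE_injective _)) (by simp) fun j => ?_
    rw [Function.comp_def, sum_mul_add_conj_mul_exp_pow_eq,
      hmoment n n.isLt _ (Nat.lt_succ_iff.mp j.isLt), ofReal_zero, mul_zero]
  have hd : (fun k => (d k : ℂ)) = 0 := Matrix.eq_zero_of_forall_pow_sum_mul_pow_eq_zero hz hpow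
  intro k
  simpa [d, sub_eq_zero] using congrFun hd k
end

section
/- Let λ_1, λ_2 ∈ ℝ and consider the anisotropically scaled image whose pixel locations are λ_1 x_k + i λ_2 y_k (where z_k = x_k + i y_k) with the same intensities ρ_k. Then its moments μ̂_{j,l} satisfy, for all integers j, l ≥ 0: μ̂_{j,l} = 2^{−(j+l)} Σ_{s=0}^{j} Σ_{t=0}^{l} C(j,s) C(l,t) (λ_1 + λ_2)^{l−t+s} (λ_1 − λ_2)^{j−s+t} μ_{s+t, j+l−s−t}, where C(·,·) denotes the binomial coefficient and μ_{j,l} are the moments of the original image. -/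
/-! With `A = λ₁ + λ₂` and `B = λ₁ - λ₂`, the scaled point `w = λ₁ x + i λ₂ y` satisfies
`2 w = A z + B z̄` and `2 w̄ = B z + A z̄`. Expanding `(2 w)^j (2 w̄)^l` by the binomial theorem
in both factors and summing against the intensities gives the formula. -/

open Finset ComplexConjugate

theorem add_mul_pow_mul_add_mul_pow {R : Type*} [CommSemiring R] (A B u v : R) (j l : ℕ) :
    (A * u + B * v) ^ j * (B * u + A * v) ^ l
      = ∑ s ∈ range (j + 1), ∑ t ∈ range (l + 1),
          (j.choose s : R) * (l.choose t : R) * A ^ (l - t + s) * B ^ (j - s + t)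
            * (u ^ (s + t) * v ^ (j + l - s - t)) := by
  rw [add_pow, add_pow, sum_mul_sum]
  refine sum_congr rfl fun s hs => sum_congr rfl fun t ht => ?_
  have hs : s ≤ j := Nat.lt_succ_iff.mp (mem_range.mp hs)
  have ht : t ≤ l := Nat.lt_succ_iff.mp (mem_range.mp ht)
  rw [show j + l - s - t = (j - s) + (l - t) by omega, pow_add, pow_add, pow_add, pow_add,
    mul_pow, mul_pow, mul_pow, mul_pow]
  ring

namespace Complex

theorem two_mul_anisotropic (a b : ℝ) (z : ℂ) :
    2 * ((a * z.re : ℝ) + (b * z.im : ℝ) * I) = (a + b) * z + (a - b) * conj z := by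
  apply Complex.ext <;> simp <;> ring

theorem two_mul_conj_anisotropic (a b : ℝ) (z : ℂ) :
    2 * conj ((a * z.re : ℝ) + (b * z.im : ℝ) * I) = (a - b) * z + (a + b) * conj z := by
  simpa [add_comm, map_ofNat] using congrArg conj (two_mul_anisotropic a b z)

end Complex

/-- transformation of the moments under anisotropic scaling
`x + iy ↦ λ₁ x + i λ₂ y`. -/
theorem pascal_stmt12 (N : ℕ) (z : Fin N → ℂ) (ρ : Fin N → ℝ) (lam₁ lam₂ : ℝ) (j l : ℕ) :
    ∑ k, ((lam₁ * (z k).re : ℝ) + (lam₂ * (z k).im : ℝ) * Complex.I) ^ j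
        * ((starRingEnd ℂ)
            ((lam₁ * (z k).re : ℝ) + (lam₂ * (z k).im : ℝ) * Complex.I)) ^ l
        * (ρ k : ℂ)
      = ((2 : ℂ) ^ (j + l))⁻¹ * ∑ s ∈ Finset.range (j + 1), ∑ t ∈ Finset.range (l + 1),
          (j.choose s : ℂ) * (l.choose t : ℂ)
            * ((lam₁ : ℂ) + (lam₂ : ℂ)) ^ (l - t + s)
            * ((lam₁ : ℂ) - (lam₂ : ℂ)) ^ (j - s + t)
            * ∑ k, z k ^ (s + t) * (starRingEnd ℂ) (z k) ^ (j + l - s - t) * (ρ k : ℂ) := by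
  rw [eq_inv_mul_iff_mul_eq₀ (pow_ne_zero _ two_ne_zero), mul_sum]
  calc ∑ k, 2 ^ (j + l) * (((lam₁ * (z k).re : ℝ) + (lam₂ * (z k).im : ℝ) * Complex.I) ^ j
          * conj ((lam₁ * (z k).re : ℝ) + (lam₂ * (z k).im : ℝ) * Complex.I) ^ l * (ρ k : ℂ))
      = ∑ k, (2 * ((lam₁ * (z k).re : ℝ) + (lam₂ * (z k).im : ℝ) * Complex.I)) ^ j
          * (2 * conj ((lam₁ * (z k).re : ℝ) + (lam₂ * (z k).im : ℝ) * Complex.I)) ^ l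
          * (ρ k : ℂ) := by
        refine sum_congr rfl fun k _ => ?_
        rw [mul_pow, mul_pow, pow_add]
        ring
    _ = ∑ k, (∑ s ∈ range (j + 1), ∑ t ∈ range (l + 1),
          (j.choose s : ℂ) * (l.choose t : ℂ)
            * ((lam₁ : ℂ) + (lam₂ : ℂ)) ^ (l - t + s) * ((lam₁ : ℂ) - (lam₂ : ℂ)) ^ (j - s + t)
            * (z k ^ (s + t) * conj (z k) ^ (j + l - s - t))) * (ρ k : ℂ) := by
        simp_rw [Complex.two_mul_anisotropic, Complex.two_mul_conj_anisotropic,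
          add_mul_pow_mul_add_mul_pow]
    _ = _ := by
        simp_rw [sum_mul, mul_sum]
        rw [sum_comm]
        refine sum_congr rfl fun s _ => ?_
        rw [sum_comm]
        exact sum_congr rfl fun t _ => sum_congr rfl fun k _ => by ring
end

section
/- Let (z_1,…,z_N; ρ_1,…,ρ_N) be a discrete image with nonnegative intensities ρ_k ≥ 0 and μ_{0,0} = Σ_k ρ_k > 0. Then the pixel locations z_k with ρ_k > 0 all lie on a single straight line in the complex plane if and only if |μ̃_{0,2}| = μ̃_{1,1}, where μ̃_{0,2} and μ̃_{1,1} are the centralized moments of the image. -/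
/-!
With `w k = z k - c`, the triangle inequality gives `|μ̃₀₂| = ‖∑ conj (w k) ^ 2 ρ k‖ ≤ ∑ |w k|² ρ k
= μ̃₁₁`, with equality iff a single unit `u` rotates every term onto the nonnegative real axis.
Writing `u = b²`, that says `b * conj (w k)` is real for every pixel with `ρ k > 0`, i.e. these
pixels lie on the line `c + ℝ b`. Conversely, a line carrying all those pixels also carries their
weighted centroid `c`, so it is of the form `c + ℝ b`.
-/

open Complex Finset ComplexConjugate ComplexOrder

theorem Complex.exists_norm_eq_one_mul_eq_norm_of_norm_sum_eq {ι : Type*} (s : Finset ι)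
    (v : ι → ℂ) (h : ‖∑ i ∈ s, v i‖ = ∑ i ∈ s, ‖v i‖) :
    ∃ u : ℂ, ‖u‖ = 1 ∧ ∀ i ∈ s, u * v i = ‖v i‖ := by
  obtain ⟨u, hu, hS⟩ := exists_norm_eq_mul_self (∑ i ∈ s, v i)
  have hle : ∀ i ∈ s, (u * v i).re ≤ ‖v i‖ := fun i _ => by
    simpa [hu] using re_le_norm (u * v i)
  have hsum : ∑ i ∈ s, (u * v i).re = ∑ i ∈ s, ‖v i‖ := by
    rw [← re_sum, ← mul_sum, ← hS, ofReal_re, h]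
  refine ⟨u, hu, fun i hi => ?_⟩
  have hnonneg : 0 ≤ u * v i := by
    rw [← re_eq_norm, norm_mul, hu, one_mul]
    exact (sum_eq_sum_iff_of_le hle).1 hsum i hi
  rw [eq_coe_norm_of_nonneg hnonneg, norm_mul, hu, one_mul]

theorem Complex.im_eq_zero_of_sq_eq_normSq {x : ℂ} (h : x ^ 2 = normSq x) : x.im = 0 := by
  have hre := congrArg re h
  simp only [sq, mul_re, ofReal_re, normSq_apply] at hre
  nlinarith

theorem norm_conj_sq_mul_ofReal {w : ℂ} {r : ℝ} (hr : 0 ≤ r) :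
    ‖conj w ^ 2 * r‖ = normSq w * r := by
  rw [norm_mul, norm_pow, norm_conj, norm_real, Real.norm_of_nonneg hr, Complex.sq_norm]

section

variable {ι : Type*} (s : Finset ι) (w : ι → ℂ) {ρ : ι → ℝ}

theorem exists_forall_eq_ofReal_mul_of_norm_sum_conj_sq_eq (hρ : ∀ i ∈ s, 0 ≤ ρ i)
    (h : ‖∑ i ∈ s, conj (w i) ^ 2 * ρ i‖ = ∑ i ∈ s, normSq (w i) * ρ i) :
    ∃ b : ℂ, ‖b‖ = 1 ∧ ∀ i ∈ s, 0 < ρ i → ∃ t : ℝ, w i = t * b := by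
  rw [← sum_congr rfl fun i hi => norm_conj_sq_mul_ofReal (w := w i) (hρ i hi)] at h
  obtain ⟨u, hu, hv⟩ := exists_norm_eq_one_mul_eq_norm_of_norm_sum_eq s _ h
  obtain ⟨b, hbu⟩ := IsAlgClosed.exists_pow_nat_eq u two_pos
  have hb : ‖b‖ = 1 := by
    rwa [← pow_left_inj₀ (norm_nonneg b) zero_le_one two_ne_zero, ← norm_pow, hbu, one_pow]
  refine ⟨b, hb, fun i hi hρi => ⟨(b * conj (w i)).re, ?_⟩⟩
  -- `x = b * conj (w i)` satisfies `x ^ 2 = u * conj (w i) ^ 2 = ‖w i‖ ^ 2 = ‖x‖ ^ 2`, so it is real.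
  have hx : (b * conj (w i)) ^ 2 = normSq (b * conj (w i)) := by
    have hρi' : (ρ i : ℂ) ≠ 0 := ofReal_ne_zero.2 hρi.ne'
    have := hv i hi
    rw [norm_conj_sq_mul_ofReal (hρ i hi), ← mul_assoc, ofReal_mul] at this
    rw [mul_pow, hbu, mul_right_cancel₀ hρi' this, normSq_mul, normSq_conj,
      normSq_eq_norm_sq b, hb]
    simp
  have hbb : conj b * b = 1 := by
    rw [← normSq_eq_conj_mul_self, normSq_eq_norm_sq, hb]; simp
  have hreal := conj_eq_iff_im.2 (im_eq_zero_of_sq_eq_normSq hx)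
  rw [conj_eq_iff_re.1 hreal]
  rw [map_mul, conj_conj] at hreal
  linear_combination -(w i) * hbb + b * hreal

theorem norm_sum_conj_sq_eq_of_forall_eq_ofReal_mul (hρ : ∀ i ∈ s, 0 ≤ ρ i) {b : ℂ}
    (hb : ‖b‖ = 1) (hw : ∀ i ∈ s, 0 < ρ i → ∃ t : ℝ, w i = t * b) :
    ‖∑ i ∈ s, conj (w i) ^ 2 * ρ i‖ = ∑ i ∈ s, normSq (w i) * ρ i := by
  have hterm : ∀ i ∈ s, conj (w i) ^ 2 * ρ i = ((normSq (w i) * ρ i : ℝ) : ℂ) * conj b ^ 2 := by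
    intro i hi
    rcases (hρ i hi).lt_or_eq with hρi | hρi
    · obtain ⟨t, ht⟩ := hw i hi hρi
      rw [ht, normSq_mul, normSq_ofReal, normSq_eq_norm_sq b, hb, map_mul, conj_ofReal]
      push_cast
      ring
    · simp [← hρi]
  rw [sum_congr rfl hterm, ← sum_mul, ← ofReal_sum, norm_mul, norm_pow, norm_conj, hb, one_pow,
    mul_one, norm_real, Real.norm_of_nonneg]
  exact sum_nonneg fun i hi => mul_nonneg (normSq_nonneg _) (hρ i hi)

theorem norm_sum_conj_sq_eq_iff (hρ : ∀ i ∈ s, 0 ≤ ρ i) :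
    ‖∑ i ∈ s, conj (w i) ^ 2 * ρ i‖ = ∑ i ∈ s, normSq (w i) * ρ i ↔
      ∃ b : ℂ, ‖b‖ = 1 ∧ ∀ i ∈ s, 0 < ρ i → ∃ t : ℝ, w i = t * b :=
  ⟨exists_forall_eq_ofReal_mul_of_norm_sum_conj_sq_eq s w hρ, fun ⟨_, hb, hw⟩ =>
    norm_sum_conj_sq_eq_of_forall_eq_ofReal_mul s w hρ hb hw⟩

end

theorem exists_centroid_eq_add_ofReal_mul {ι : Type*} [Fintype ι] {z : ι → ℂ} {ρ : ι → ℝ}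
    (hρ : ∑ i, ρ i ≠ 0) {a b : ℂ} (hz : ∀ i, ρ i ≠ 0 → ∃ t : ℝ, z i = a + t * b) :
    ∃ T : ℝ, (∑ i, z i * ρ i) / (∑ i, (ρ i : ℂ)) = a + T * b := by
  have hz' : ∀ i, ∃ t : ℝ, z i * ρ i = (a + t * b) * ρ i := fun i => by
    by_cases hρi : ρ i = 0
    · exact ⟨0, by simp [hρi]⟩
    · obtain ⟨t, ht⟩ := hz i hρi
      exact ⟨t, by rw [ht]⟩
  choose t ht using hz'
  refine ⟨(∑ i, t i * ρ i) / ∑ i, ρ i, ?_⟩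
  have hρ' : (∑ i, (ρ i : ℂ)) ≠ 0 := by exact_mod_cast hρ
  have hsum : ∑ i, z i * ρ i = a * ∑ i, (ρ i : ℂ) + ((∑ i, t i * ρ i : ℝ) : ℂ) * b := by
    push_cast
    rw [mul_sum, sum_mul, ← sum_add_distrib]
    exact sum_congr rfl fun i _ => by rw [ht]; ring
  rw [hsum]
  push_cast
  field_simp

/-- the pixels with positive intensity lie on a single straight line iff
`|μ̃_{0,2}| = μ̃_{1,1}`. -/
theorem pascal_stmt14 (N : ℕ) (z : Fin N → ℂ) (ρ : Fin N → ℝ)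
    (hρ : ∀ k, 0 ≤ ρ k) (hμ : 0 < ∑ k, ρ k)
    (c : ℂ) (hc : c = (∑ k, z k * (ρ k : ℂ)) / (∑ k, (ρ k : ℂ))) :
    (∃ a b : ℂ, ‖b‖ = 1 ∧ ∀ k, 0 < ρ k → ∃ t : ℝ, z k = a + (t : ℂ) * b)
      ↔ ‖∑ k, ((starRingEnd ℂ) (z k - c)) ^ 2 * (ρ k : ℂ)‖
          = ∑ k, Complex.normSq (z k - c) * ρ k := by
  rw [norm_sum_conj_sq_eq_iff _ _ fun k _ => hρ k]
  constructor
  · rintro ⟨a, b, hb, hline⟩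
    obtain ⟨T, hT⟩ := exists_centroid_eq_add_ofReal_mul hμ.ne' fun k hk =>
      hline k ((hρ k).lt_of_ne' hk)
    refine ⟨b, hb, fun k _ hk => ?_⟩
    obtain ⟨t, ht⟩ := hline k hk
    exact ⟨t - T, by rw [ht, hc, hT]; push_cast; ring⟩
  · rintro ⟨b, hb, hline⟩
    exact ⟨c, b, hb, fun k hk =>
      (hline k (mem_univ k) hk).imp fun t ht => by rw [← ht]; ring⟩
end

section
/- Let (z_1,…,z_N; ρ_1,…,ρ_N) be a discrete image with pairwise distinct pixel locations, and let θ_0 ∈ ℝ. Then the set of nonzero-intensity weighted pixels {(z_k, ρ_k) : ρ_k ≠ 0} is invariant under reflection about the line through the origin at angle θ_0 (i.e. equals {(\overline{z_k} e^{2iθ_0}, ρ_k) : ρ_k ≠ 0}) if and only if for all integers j, l ≥ 0: Re(μ_{j,l}) sin((l−j)θ_0) + Im(μ_{j,l}) cos((l−j)θ_0) = 0 (equivalently, tan((l−j)θ_0) = −Im(μ_{j,l})/Re(μ_{j,l}) whenever Re(μ_{j,l}) ≠ 0). -/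
/-!
Both sides say that the image and its reflection carry the same weighted point configuration.
With distinct locations, the configuration is encoded by its fibre sums `a ↦ ∑_{z_k = a} ρ_k`,
and these are determined already by the moments `μ_{j,0}`: pairing the weights with a polynomial
that vanishes at every pixel location except `a` isolates the fibre over `a`. Reflection sends
`μ_{j,l}` to `conj μ_{j,l} · e^{2i(j-l)θ₀}`, which equals `μ_{j,l}` exactly when
`μ_{j,l} e^{i(l-j)θ₀}` is real, i.e. when its imaginary part, the expression in the theorem,
vanishes.
-/

open Finset Complex ComplexConjugate

section FiberSum

variable {ι α M : Type*} [Fintype ι] [DecidableEq α]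

def fiberSum [AddCommMonoid M] (v : ι → α) (ρ : ι → M) (a : α) : M :=
  ∑ k with v k = a, ρ k

lemma fiberSum_apply_of_injective [AddCommMonoid M] {v : ι → α} (hv : Function.Injective v)
    (ρ : ι → M) (k : ι) : fiberSum v ρ (v k) = ρ k := by
  rw [fiberSum, Finset.sum_eq_single_of_mem k (by simp)]
  intro i hi hik
  exact absurd (hv (Finset.mem_filter.1 hi).2) hik

lemma exists_eq_of_fiberSum_ne_zero [AddCommMonoid M] {v : ι → α} {ρ : ι → M} {a : α}
    (h : fiberSum v ρ a ≠ 0) : ∃ k, v k = a := by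
  obtain ⟨k, hk, -⟩ := Finset.exists_ne_zero_of_sum_ne_zero h
  exact ⟨k, (Finset.mem_filter.1 hk).2⟩

lemma setOf_weighted_eq_of_injective [AddCommMonoid M] {v : ι → α} (hv : Function.Injective v)
    (ρ : ι → M) :
    {p : α × M | ∃ k, ρ k ≠ 0 ∧ p = (v k, ρ k)} = {p | p.2 ≠ 0 ∧ fiberSum v ρ p.1 = p.2} := by
  ext ⟨a, c⟩
  simp only [Set.mem_ofPred_eq, Prod.mk.injEq]
  constructor
  · rintro ⟨k, hk, rfl, rfl⟩
    exact ⟨hk, fiberSum_apply_of_injective hv ρ k⟩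
  · rintro ⟨hc, hsum⟩
    obtain ⟨k, rfl⟩ := exists_eq_of_fiberSum_ne_zero (hsum ▸ hc)
    rw [fiberSum_apply_of_injective hv] at hsum
    exact ⟨k, hsum ▸ hc, rfl, hsum.symm⟩

lemma setOf_weighted_eq_iff [AddCommMonoid M] {v w : ι → α} (hv : Function.Injective v)
    (hw : Function.Injective w) (ρ : ι → M) :
    {p : α × M | ∃ k, ρ k ≠ 0 ∧ p = (v k, ρ k)} = {p | ∃ k, ρ k ≠ 0 ∧ p = (w k, ρ k)} ↔
      fiberSum v ρ = fiberSum w ρ := by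
  rw [setOf_weighted_eq_of_injective hv, setOf_weighted_eq_of_injective hw]
  refine ⟨fun h => funext fun a => ?_, fun h => by rw [h]⟩
  have mem_iff (c : M) := Set.ext_iff.1 h (a, c)
  simp only [Set.mem_ofPred_eq] at mem_iff
  by_cases hv0 : fiberSum v ρ a = 0
  · by_contra hne
    exact hne ((mem_iff (fiberSum w ρ a)).2 ⟨Ne.symm (hv0 ▸ hne), rfl⟩).2
  · exact ((mem_iff _).1 ⟨hv0, rfl⟩).2.symm

lemma sum_mul_eq_sum_fiberSum [CommSemiring M] (v : ι → α) (ρ : ι → M) (f : α → M)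
    {S : Finset α} (hS : ∀ k, v k ∈ S) :
    ∑ k, f (v k) * ρ k = ∑ a ∈ S, f a * fiberSum v ρ a := by
  simp only [fiberSum, Finset.mul_sum]
  rw [← Finset.sum_fiberwise_of_maps_to (g := v) (fun k _ => hS k)]
  refine Finset.sum_congr rfl fun a _ => Finset.sum_congr rfl fun k hk => ?_
  rw [(Finset.mem_filter.1 hk).2]

end FiberSum

section Polynomial

variable {ι K : Type*} [Fintype ι]

lemma sum_eval_mul_eq_of_sum_pow_mul_eq [CommSemiring K] {v w : ι → K} {ρ : ι → K}
    (h : ∀ j : ℕ, ∑ k, v k ^ j * ρ k = ∑ k, w k ^ j * ρ k) (p : Polynomial K) :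
    ∑ k, p.eval (v k) * ρ k = ∑ k, p.eval (w k) * ρ k := by
  have expand (u : ι → K) :
      ∑ k, p.eval (u k) * ρ k = p.sum fun j c => c * ∑ k, u k ^ j * ρ k := by
    simp only [Polynomial.eval_eq_sum, Polynomial.sum, Finset.sum_mul, Finset.mul_sum]
    rw [Finset.sum_comm]
    simp only [mul_assoc]
  simp only [expand, h]

lemma fiberSum_eq_of_sum_pow_mul_eq [CommRing K] [IsDomain K] [DecidableEq K]
    {v w : ι → K} {ρ : ι → K}
    (h : ∀ j : ℕ, ∑ k, v k ^ j * ρ k = ∑ k, w k ^ j * ρ k) : fiberSum v ρ = fiberSum w ρ := by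
  funext a
  set S := insert a (univ.image v ∪ univ.image w)
  set p : Polynomial K := ∏ u ∈ S.erase a, (Polynomial.X - Polynomial.C u)
  have hpa : p.eval a ≠ 0 := by
    simp only [p, Polynomial.eval_prod, Polynomial.eval_sub, Polynomial.eval_X, Polynomial.eval_C]
    exact Finset.prod_ne_zero_iff.2 fun u hu => sub_ne_zero.2 (Finset.ne_of_mem_erase hu).symm
  have isolate (u : ι → K) (hu : ∀ k, u k ∈ S) :
      ∑ k, p.eval (u k) * ρ k = p.eval a * fiberSum u ρ a := by
    rw [sum_mul_eq_sum_fiberSum u ρ (fun x => p.eval x) hu,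
      Finset.sum_eq_single_of_mem a (Finset.mem_insert_self _ _)]
    intro b hb hba
    have hpb : p.eval b = 0 := by
      simp only [p, Polynomial.eval_prod]
      exact Finset.prod_eq_zero (Finset.mem_erase.2 ⟨hba, hb⟩) (by simp)
    rw [hpb, zero_mul]
  refine mul_left_cancel₀ hpa ?_
  rw [← isolate v (fun k => by simp [S]), ← isolate w (fun k => by simp [S]),
    sum_eval_mul_eq_of_sum_pow_mul_eq h]

end Polynomial

lemma im_mul_exp_mul_I (x : ℂ) (φ : ℝ) :
    (x * cexp (φ * I)).im = x.re * Real.sin φ + x.im * Real.cos φ := by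
  rw [exp_mul_I]
  simp [cos_ofReal_re, sin_ofReal_re]

lemma re_mul_sin_add_im_mul_cos_eq_zero_iff (x : ℂ) (φ : ℝ) :
    x.re * Real.sin φ + x.im * Real.cos φ = 0 ↔ conj x * cexp (-(2 * φ * I)) = x := by
  have hconj : conj (x * cexp (φ * I)) = conj x * cexp (-(φ * I)) := by
    rw [map_mul, ← exp_conj]; simp
  have hsplit : cexp (-(2 * φ * I)) = cexp (-(φ * I)) * cexp (-(φ * I)) := by
    rw [← exp_add]; ring_nf
  have hcancel : cexp (-(φ * I)) * cexp (φ * I) = 1 := by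
    rw [← exp_add, neg_add_cancel, exp_zero]
  rw [← im_mul_exp_mul_I, ← conj_eq_iff_im, hconj]
  constructor
  · intro h
    rw [hsplit, ← mul_assoc, h, mul_assoc, mul_comm (cexp _), hcancel, mul_one]
  · intro h
    nth_rewrite 2 [← h]
    rw [hsplit, mul_assoc, mul_assoc, hcancel, mul_one]

lemma sum_reflect_moment {ι : Type*} [Fintype ι] (z : ι → ℂ) (ρ : ι → ℝ) (θ : ℝ) (j l : ℕ) :
    ∑ k, (conj (z k) * cexp (2 * I * θ)) ^ j * conj (conj (z k) * cexp (2 * I * θ)) ^ l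
        * (ρ k : ℂ)
      = conj (∑ k, z k ^ j * conj (z k) ^ l * (ρ k : ℂ))
          * cexp (-(2 * ((((l : ℝ) - j) * θ : ℝ) : ℂ) * I)) := by
  have hexp : cexp (2 * I * θ) ^ j * conj (cexp (2 * I * θ)) ^ l
      = cexp (-(2 * ((((l : ℝ) - j) * θ : ℝ) : ℂ) * I)) := by
    rw [← exp_conj, ← exp_nat_mul, ← exp_nat_mul, ← exp_add]
    congr 1
    simp only [map_mul, conj_I, conj_ofReal, map_ofNat]
    push_cast
    ring
  rw [map_sum, Finset.sum_mul]
  refine Finset.sum_congr rfl fun k _ => ?_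
  rw [← hexp]
  simp only [map_mul, map_pow, conj_conj, conj_ofReal, mul_pow]
  ring

section Moments

variable {ι : Type*} [Fintype ι]

lemma ofReal_fiberSum (v : ι → ℂ) (ρ : ι → ℝ) (a : ℂ) :
    ((fiberSum v ρ a : ℝ) : ℂ) = fiberSum v (fun k => (ρ k : ℂ)) a :=
  Complex.ofReal_sum _ _

lemma fiberSum_eq_iff_moments_eq (v w : ι → ℂ) (ρ : ι → ℝ) :
    fiberSum v ρ = fiberSum w ρ ↔ ∀ j l : ℕ,
      ∑ k, v k ^ j * conj (v k) ^ l * (ρ k : ℂ) = ∑ k, w k ^ j * conj (w k) ^ l * (ρ k : ℂ) := by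
  constructor
  · intro h j l
    have hC : fiberSum v (fun k => (ρ k : ℂ)) = fiberSum w (fun k => (ρ k : ℂ)) :=
      funext fun a => by rw [← ofReal_fiberSum, ← ofReal_fiberSum, h]
    have hv : ∀ k, v k ∈ univ.image v ∪ univ.image w := by simp
    have hw : ∀ k, w k ∈ univ.image v ∪ univ.image w := by simp
    rw [sum_mul_eq_sum_fiberSum v _ (fun x => x ^ j * conj x ^ l) hv,
      sum_mul_eq_sum_fiberSum w _ (fun x => x ^ j * conj x ^ l) hw, hC]
  · intro h
    have hC := fiberSum_eq_of_sum_pow_mul_eq (v := v) (w := w) (ρ := fun k => (ρ k : ℂ))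
      fun j => by simpa using h j 0
    funext a
    have ha := congrFun hC a
    rw [← ofReal_fiberSum, ← ofReal_fiberSum] at ha
    exact_mod_cast ha

end Moments

/-- an image (with pairwise distinct pixel locations) is symmetric under
reflection about the line through the origin at angle `θ₀` iff
`Re(μ_{j,l}) sin((l-j)θ₀) + Im(μ_{j,l}) cos((l-j)θ₀) = 0` for all `j, l ≥ 0`. -/
theorem pascal_stmt18 (N : ℕ) (z : Fin N → ℂ) (ρ : Fin N → ℝ)
    (hz : Function.Injective z) (θ₀ : ℝ) :
    ({p : ℂ × ℝ | ∃ k, ρ k ≠ 0 ∧ p = (z k, ρ k)}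
        = {p : ℂ × ℝ | ∃ k, ρ k ≠ 0 ∧
            p = ((starRingEnd ℂ) (z k) * Complex.exp (2 * Complex.I * (θ₀ : ℂ)), ρ k)})
      ↔ ∀ j l : ℕ,
          (∑ k, z k ^ j * (starRingEnd ℂ) (z k) ^ l * (ρ k : ℂ)).re
              * Real.sin (((l : ℝ) - (j : ℝ)) * θ₀)
            + (∑ k, z k ^ j * (starRingEnd ℂ) (z k) ^ l * (ρ k : ℂ)).im
              * Real.cos (((l : ℝ) - (j : ℝ)) * θ₀) = 0 := by
  have hreflect : Function.Injective fun k => conj (z k) * cexp (2 * I * θ₀) :=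
    fun _ _ h => hz (star_injective (mul_right_cancel₀ (exp_ne_zero _) h))
  rw [setOf_weighted_eq_iff hz hreflect, fiberSum_eq_iff_moments_eq]
  refine forall₂_congr fun j l => ?_
  rw [re_mul_sin_add_im_mul_cos_eq_zero_iff, sum_reflect_moment, eq_comm]
end
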